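/- arXiv:0906.3784 — 2 statements merged into one kernel-verified Lean document; each statement's English description precedes it below -/
import Mathlib

section
/- Point-picking lemma: Let X be a metric space, T > 0, and let F : X × (0,T] → ℝ be a function. Fix x₀ ∈ X, A > 0, ε > 0 with the property that F is bounded on the closed ball B̄(x₀, (2A+c)ε) × (0,T] for some constant c > 0 (boundedness on compact sets). Suppose there exists (x, t) ∈ B(x₀, cε) × (0,T] with F(x,t) > ε⁻². Then there exists (x̄, t̄) ∈ B(x₀, (2A+c)ε) × (0,T] with Q̄ := F(x̄, t̄) > ε⁻² such that F(y,s) ≤ 4Q̄ for all (y,s) ∈ B(x̄, A·Q̄^{-1/2}) × (0, t̄]. -/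
/-!
Each selection step moves the base point by less than `A / √Q` and at least quadruples `Q`,
hence halves `A / √Q`. So `dist x x₀ + 2 * A / √Q` never increases along the selection,
which keeps every selected point inside `B(x₀, (2A + c)ε)`, where `F` is bounded; as `Q`
grows geometrically, the selection must stop at a point where no quadrupling is possible.
-/

open Metric Set

theorem exists_mem_of_bddAbove_of_mul_escape {α K : Type*} [Field K] [LinearOrder K]
    [IsStrictOrderedRing K] [Archimedean K] {Q : α → K} {S : Set α} {P : α → Prop}
    {r : K} (hr : 1 < r) (hbdd : BddAbove (Q '' S)) {p₀ : α} (hp₀ : p₀ ∈ S)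
    (hQp₀ : 0 < Q p₀) (hescape : ∀ p ∈ S, ¬P p → ∃ q ∈ S, r * Q p ≤ Q q) :
    ∃ p ∈ S, P p := by
  by_contra! hbad
  have hgrow : ∀ n : ℕ, ∃ p ∈ S, r ^ n * Q p₀ ≤ Q p := by
    intro n
    induction n with
    | zero => exact ⟨p₀, hp₀, by simp⟩
    | succ n ih =>
      obtain ⟨p, hp, hle⟩ := ih
      obtain ⟨q, hq, hpq⟩ := hescape p hp (hbad p hp)
      refine ⟨q, hq, le_trans ?_ hpq⟩
      rw [pow_succ', mul_assoc]
      exact mul_le_mul_of_nonneg_left hle (by positivity)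
  obtain ⟨M, hM⟩ := hbdd
  obtain ⟨n, hn⟩ := pow_unbounded_of_one_lt (M / Q p₀) hr
  obtain ⟨p, hp, hle⟩ := hgrow n
  have hQM : Q p ≤ M := hM (mem_image_of_mem Q hp)
  have hMlt : M < r ^ n * Q p₀ := (div_lt_iff₀ hQp₀).mp hn
  exact absurd (hle.trans hQM) hMlt.not_ge

lemma two_mul_div_sqrt_le_div_sqrt {A a b : ℝ} (hA : 0 ≤ A) (ha : 0 < a) (hab : 4 * a ≤ b) :
    2 * A / √b ≤ A / √a := by
  have hsqrt4 : √(4 : ℝ) = 2 := by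
    rw [show (4 : ℝ) = 2 ^ 2 by norm_num, Real.sqrt_sq (by norm_num)]
  calc 2 * A / √b ≤ 2 * A / √(4 * a) :=
        div_le_div_of_nonneg_left (by positivity) (by positivity) (Real.sqrt_le_sqrt hab)
    _ = A / √a := by
        rw [Real.sqrt_mul (by norm_num), hsqrt4]
        field_simp

section PointPicking

variable {X : Type*} [PseudoMetricSpace X] (F : X → ℝ → ℝ) (x₀ : X) (T A R q₀ : ℝ)

def BackwardBallBound (p : X × ℝ) : Prop :=
  ∀ y ∈ ball p.1 (A / √(F p.1 p.2)), ∀ s ∈ Ioc 0 p.2, F y s ≤ 4 * F p.1 p.2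

def pickingRegion : Set (X × ℝ) :=
  {p | p.2 ∈ Ioc 0 T ∧ q₀ < F p.1 p.2 ∧ dist p.1 x₀ + 2 * A / √(F p.1 p.2) < R}

variable {F x₀ T A R q₀}

lemma mem_ball_of_mem_pickingRegion (hA : 0 ≤ A) {p : X × ℝ}
    (hp : p ∈ pickingRegion F x₀ T A R q₀) : p.1 ∈ ball x₀ R := by
  have : 0 ≤ 2 * A / √(F p.1 p.2) := by positivity
  exact mem_ball.mpr (by linarith [hp.2.2])

lemma mk_mem_pickingRegion {ε c : ℝ} (hA : 0 < A) (hε : 0 < ε) {x : X} {t : ℝ}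
    (hx : x ∈ ball x₀ (c * ε)) (ht : t ∈ Ioc 0 T) (hF : ε⁻¹ ^ 2 < F x t) :
    (x, t) ∈ pickingRegion F x₀ T A ((2 * A + c) * ε) (ε⁻¹ ^ 2) := by
  have hsqrt : ε⁻¹ < √(F x t) := Real.lt_sqrt (by positivity) |>.mpr hF
  have hdisp : 2 * A / √(F x t) < 2 * A * ε := by
    calc 2 * A / √(F x t) < 2 * A / ε⁻¹ :=
          div_lt_div_of_pos_left (by positivity) (by positivity) hsqrt
      _ = 2 * A * ε := by rw [div_inv_eq_mul]
  refine ⟨ht, hF, ?_⟩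
  have := mem_ball.mp hx
  dsimp only
  linarith

lemma exists_mem_pickingRegion_four_mul_le (hA : 0 ≤ A) (hq₀ : 0 ≤ q₀) {p : X × ℝ}
    (hp : p ∈ pickingRegion F x₀ T A R q₀) (hbad : ¬BackwardBallBound F A p) :
    ∃ p' ∈ pickingRegion F x₀ T A R q₀, 4 * F p.1 p.2 ≤ F p'.1 p'.2 := by
  obtain ⟨⟨ht0, htT⟩, hq, hdisp⟩ := hp
  simp only [BackwardBallBound, not_forall, not_le] at hbad
  obtain ⟨y, hy, s, ⟨hs0, hst⟩, hFy⟩ := hbad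
  have hFpos : 0 < F p.1 p.2 := hq₀.trans_lt hq
  have hhalve := two_mul_div_sqrt_le_div_sqrt hA hFpos hFy.le
  have htri : dist y x₀ ≤ dist y p.1 + dist p.1 x₀ := dist_triangle _ _ _
  have hy' := mem_ball.mp hy
  have hsplit : 2 * A / √(F p.1 p.2) = 2 * (A / √(F p.1 p.2)) := mul_div_assoc _ _ _
  refine ⟨(y, s), ⟨⟨hs0, hst.trans htT⟩, by dsimp only; linarith, ?_⟩, hFy.le⟩
  dsimp only
  linarith

end PointPicking

theorem point_picking_lemma_general {X : Type*} [MetricSpace X] (T A ε c : ℝ)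
    (hA : 0 < A) (hε : 0 < ε)
    (F : X → ℝ → ℝ) (x₀ : X)
    (hbdd : ∃ M : ℝ, ∀ y ∈ Metric.closedBall x₀ ((2 * A + c) * ε),
      ∀ s ∈ Set.Ioc (0:ℝ) T, F y s ≤ M)
    (hstart : ∃ x ∈ Metric.ball x₀ (c * ε), ∃ t ∈ Set.Ioc (0:ℝ) T, ε⁻¹ ^ 2 < F x t) :
    ∃ xb ∈ Metric.ball x₀ ((2 * A + c) * ε), ∃ tb ∈ Set.Ioc (0:ℝ) T,
      ε⁻¹ ^ 2 < F xb tb ∧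
      ∀ y ∈ Metric.ball xb (A / Real.sqrt (F xb tb)), ∀ s ∈ Set.Ioc (0:ℝ) tb,
        F y s ≤ 4 * F xb tb := by
  obtain ⟨M, hM⟩ := hbdd
  obtain ⟨x, hx, t, ht, hFx⟩ := hstart
  set S := pickingRegion F x₀ T A ((2 * A + c) * ε) (ε⁻¹ ^ 2)
  have hSbdd : BddAbove ((fun p : X × ℝ => F p.1 p.2) '' S) := by
    refine ⟨M, ?_⟩
    rintro _ ⟨p, hp, rfl⟩
    exact hM p.1 (ball_subset_closedBall (mem_ball_of_mem_pickingRegion hA.le hp)) p.2 hp.1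
  obtain ⟨p, hp, hgood⟩ := exists_mem_of_bddAbove_of_mul_escape (by norm_num : (1 : ℝ) < 4)
    hSbdd (mk_mem_pickingRegion hA hε hx ht hFx)
    ((by positivity : (0 : ℝ) < ε⁻¹ ^ 2).trans hFx)
    fun p hp hbad => exists_mem_pickingRegion_four_mul_le hA.le (by positivity) hp hbad
  exact ⟨p.1, mem_ball_of_mem_pickingRegion hA.le hp, p.2, hp.1, hp.2.1, hgood⟩

/-- Abstract point-picking lemma (Claim A). -/
theorem point_picking_lemma {X : Type*} [MetricSpace X] (T A ε c : ℝ)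
    (hT : 0 < T) (hA : 0 < A) (hε : 0 < ε) (hc : 0 < c)
    (F : X → ℝ → ℝ) (x₀ : X)
    (hbdd : ∃ M : ℝ, ∀ y ∈ Metric.closedBall x₀ ((2 * A + c) * ε),
      ∀ s ∈ Set.Ioc (0:ℝ) T, F y s ≤ M)
    (hstart : ∃ x ∈ Metric.ball x₀ (c * ε), ∃ t ∈ Set.Ioc (0:ℝ) T, ε⁻¹ ^ 2 < F x t) :
    ∃ xb ∈ Metric.ball x₀ ((2 * A + c) * ε), ∃ tb ∈ Set.Ioc (0:ℝ) T,
      ε⁻¹ ^ 2 < F xb tb ∧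
      ∀ y ∈ Metric.ball xb (A / Real.sqrt (F xb tb)), ∀ s ∈ Set.Ioc (0:ℝ) tb,
        F y s ≤ 4 * F xb tb :=
  point_picking_lemma_general T A ε c hA hε F x₀ hbdd hstart
end

section
/- Evolution inequality for the localized curvature quantity: Suppose u = h·|Rm|² where h ≥ 0 satisfies (∂ₜ − Δ)h ≤ (10/b²)h and |∇h| ≤ (√10/b)·h^{1/2}, and |Rm|² satisfies (∂ₜ − Δ)|Rm|² ≤ −2|∇Rm|² + 16|Rm|³, with |Rm| ≤ 4 on the support of h. Then (∂ₜ − Δ)u ≤ (10/b² + 64)·u + 320/b². -/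
/-!
Multiply the evolution inequality of `|Rm|²` by `h` and add `|Rm|²` times that of `h`. The
gradient cross term `2|∇h| |∇|Rm|²| ≤ 4 (√10/b) √h |Rm| |∇Rm|` is split by AM-GM into
`2h|∇Rm|²`, which the good term `-2h|∇Rm|²` cancels, and `2(10/b²)|Rm|² ≤ 320/b²`; the
reaction term `16h|Rm|³` is at most `64h|Rm|²` since `|Rm| ≤ 4`.
-/

lemma cross_term_le_of_le_mul_sqrt {G c h R N : ℝ} (hG : G ≤ c * √h) (hh : 0 ≤ h)
    (hRN : 0 ≤ R * N) :
    2 * G * (2 * R * N) ≤ 2 * (h * N ^ 2 + c ^ 2 * R ^ 2) :=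
  calc 2 * G * (2 * R * N)
      ≤ 2 * (c * √h) * (2 * R * N) := by gcongr; linarith
    _ = 2 * (2 * (√h * N) * (c * R)) := by ring
    _ ≤ 2 * ((√h * N) ^ 2 + (c * R) ^ 2) := by gcongr; exact two_mul_le_add_sq _ _
    _ = 2 * (h * N ^ 2 + c ^ 2 * R ^ 2) := by rw [mul_pow, mul_pow, Real.sq_sqrt hh]

lemma mul_pow_three_le_of_le {h R M : ℝ} (hh : 0 ≤ h) (hRM : R ≤ M) :
    h * R ^ 3 ≤ M * (h * R ^ 2) :=
  calc h * R ^ 3 = R * (h * R ^ 2) := by ring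
    _ ≤ M * (h * R ^ 2) := by gcongr

theorem localized_curvature_evolution_inequality_general (b h R N Ph Gh PR : ℝ)
    (hh : h ∈ Set.Icc (0:ℝ) 1) (hR : R ∈ Set.Icc (0:ℝ) 4)
    (hN : 0 ≤ N)
    (hPh : Ph ≤ 10 / b ^ 2 * h)
    (hGh : Gh ≤ Real.sqrt 10 / b * Real.sqrt h)
    (hPR : PR ≤ -2 * N ^ 2 + 16 * R ^ 3) :
    Ph * R ^ 2 + h * PR + 2 * Gh * (2 * R * N) ≤
      (10 / b ^ 2 + 64) * (h * R ^ 2) + 320 / b ^ 2 := by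
  obtain ⟨hh0, -⟩ := hh
  obtain ⟨hR0, hR4⟩ := hR
  have cutoff : Ph * R ^ 2 ≤ 10 / b ^ 2 * (h * R ^ 2) := by
    rw [← mul_assoc]; exact mul_le_mul_of_nonneg_right hPh (sq_nonneg R)
  have reaction : h * PR ≤ -2 * (h * N ^ 2) + 64 * (h * R ^ 2) := by
    have := mul_le_mul_of_nonneg_left hPR hh0
    linarith [mul_pow_three_le_of_le hh0 hR4]
  have cross : 2 * Gh * (2 * R * N) ≤ 2 * (h * N ^ 2 + 10 / b ^ 2 * R ^ 2) := by
    have hc : (√10 / b) ^ 2 = 10 / b ^ 2 := by rw [div_pow, Real.sq_sqrt (by norm_num)]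
    simpa only [hc] using cross_term_le_of_le_mul_sqrt hGh hh0 (by positivity)
  have tail : 10 / b ^ 2 * R ^ 2 ≤ 160 / b ^ 2 :=
    calc 10 / b ^ 2 * R ^ 2 ≤ 10 / b ^ 2 * 4 ^ 2 := by gcongr
      _ = 160 / b ^ 2 := by ring
  linear_combination cutoff + reaction + cross + 2 * tail

/-- Pointwise algebraic form of the evolution inequality for `u = h·|Rm|²`.
Here `h` is the cutoff value, `R = |Rm|`, `N = |∇Rm|`, `Ph = (∂ₜ-Δ)h`,
`Gh = |∇h|`, `PR = (∂ₜ-Δ)|Rm|²`. -/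
theorem localized_curvature_evolution_inequality (b h R N Ph Gh PR : ℝ)
    (hb : 0 < b) (hh : h ∈ Set.Icc (0:ℝ) 1) (hR : R ∈ Set.Icc (0:ℝ) 4)
    (hN : 0 ≤ N) (hGh0 : 0 ≤ Gh)
    (hPh : Ph ≤ 10 / b ^ 2 * h)
    (hGh : Gh ≤ Real.sqrt 10 / b * Real.sqrt h)
    (hPR : PR ≤ -2 * N ^ 2 + 16 * R ^ 3) :
    Ph * R ^ 2 + h * PR + 2 * Gh * (2 * R * N) ≤
      (10 / b ^ 2 + 64) * (h * R ^ 2) + 320 / b ^ 2 :=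
  localized_curvature_evolution_inequality_general b h R N Ph Gh PR hh hR hN hPh hGh hPR
end
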